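/- arXiv:2510.13673 — 6 statements merged into one kernel-verified Lean document; each statement's English description precedes it below -/
import Mathlib

section
/- Let p be a prime, let h and d be natural numbers with d ≥ 1, and let n ∈ ℕ^d be a multi-index. Then Σ_{i=1}^d v_p(⌊n_i/p^h⌋!) ≤ ⌊(Σ_{i=1}^d n_i)/(p^h(p−1))⌋ + 1; i.e. v^h(n) ≤ v_h(n) + 1. -/
/-- For a prime `p`, `h d : ℕ` with `d ≥ 1` and a multi-index `n : Fin d → ℕ`,
`v^h(n) = ∑ i, v_p(⌊n_i/p^h⌋!) ≤ ⌊|n|/(p^h(p-1))⌋ + 1 = v_h(n) + 1`. -/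
theorem vh_upper_bound (p : ℕ) (hp : p.Prime) (h d : ℕ) (hd : 1 ≤ d) (n : Fin d → ℕ) :
    ∑ i, padicValNat p (Nat.factorial (n i / p ^ h)) ≤
      (∑ i, n i) / (p ^ h * (p - 1)) + 1 := by
  haveI : Fact p.Prime := ⟨hp⟩
  have key : ∑ i, padicValNat p (Nat.factorial (n i / p ^ h)) ≤
      (∑ i, n i) / (p ^ h * (p - 1)) := by
    rw [Nat.le_div_iff_mul_le (Nat.mul_pos (pow_pos hp.pos h) (by have := hp.two_le; omega))]
    calc (∑ i, padicValNat p (Nat.factorial (n i / p ^ h))) * (p ^ h * (p - 1))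
        = ∑ i, p ^ h * ((p - 1) * padicValNat p (Nat.factorial (n i / p ^ h))) := by
          rw [Finset.sum_mul]; congr 1; ext i; ring
      _ ≤ ∑ i, n i := by
          apply Finset.sum_le_sum
          intro i _
          calc p ^ h * ((p - 1) * padicValNat p (Nat.factorial (n i / p ^ h)))
              ≤ p ^ h * (n i / p ^ h) := by
                apply Nat.mul_le_mul_left
                rw [sub_one_mul_padicValNat_factorial]
                exact Nat.sub_le _ _
            _ ≤ n i := Nat.mul_div_le _ _
  omega
end

section
/- Let p be a prime, let h < h' be natural numbers, and let d ≥ 1 be a natural number. Then there exists a constant c ∈ ℕ such that for every multi-index n ∈ ℕ^d one has ⌊|n|/(p^{h'}(p−1))⌋ ≤ Σ_{i=1}^d v_p(⌊n_i/p^h⌋!) + c; i.e. v_{h'}(n) ≤ v^h(n) + c. -/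
/-- `m / p ≤ v_p(m!)` for a prime `p`. -/
lemma div_le_padicValNat_factorial (p : ℕ) (hp : p.Prime) (m : ℕ) :
    m / p ≤ padicValNat p (Nat.factorial m) := by
  haveI : Fact p.Prime := ⟨hp⟩
  by_cases hm : m < p
  · simp [Nat.div_eq_of_lt hm]
  · push_neg at hm
    rw [padicValNat_factorial (Nat.lt_succ_self (Nat.log p m))]
    have h1 : 1 ∈ Finset.Ico 1 (Nat.log p m + 1) := by
      simp [Nat.succ_le_succ_iff, Nat.log_pos hp.one_lt hm]
    calc m / p = m / p ^ 1 := by rw [pow_one]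
    _ ≤ _ := Finset.single_le_sum (f := fun i => m / p ^ i) (fun _ _ => Nat.zero_le _) h1

/-- Dividing a sum term by term loses at most the number of terms. -/
lemma sum_div_le {ι : Type*} (s : Finset ι) (f : ι → ℕ) (q : ℕ) (hq : 0 < q) :
    (∑ i ∈ s, f i) / q ≤ (∑ i ∈ s, f i / q) + s.card := by
  have hle : (∑ i ∈ s, f i) ≤ q * ((∑ i ∈ s, f i / q) + s.card) := by
    calc (∑ i ∈ s, f i) ≤ ∑ i ∈ s, (q * (f i / q) + (q - 1)) := by
          refine Finset.sum_le_sum fun i _ => ?_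
          have hmod := Nat.mod_lt (f i) hq
          have := Nat.div_add_mod (f i) q
          omega
    _ = q * (∑ i ∈ s, f i / q) + s.card * (q - 1) := by
          rw [Finset.sum_add_distrib, Finset.mul_sum, Finset.sum_const, smul_eq_mul]
    _ ≤ q * ((∑ i ∈ s, f i / q) + s.card) := by
          rw [Nat.mul_add]
          have : s.card * (q - 1) ≤ q * s.card := by
            calc s.card * (q - 1) ≤ s.card * q := Nat.mul_le_mul_left _ (by omega)
            _ = q * s.card := Nat.mul_comm _ _
          omega
  calc (∑ i ∈ s, f i) / q ≤ (q * ((∑ i ∈ s, f i / q) + s.card)) / q :=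
        Nat.div_le_div_right hle
  _ = _ := Nat.mul_div_cancel_left _ hq

/-- For a prime `p`, naturals `h < h'` and `d ≥ 1`, there is a constant `c` such that
for every multi-index `n : Fin d → ℕ`,
`v_{h'}(n) = ⌊|n|/(p^{h'}(p-1))⌋ ≤ ∑ i, v_p(⌊n_i/p^h⌋!) + c = v^h(n) + c`. -/
theorem vh_lower_bound (p : ℕ) (hp : p.Prime) (h h' d : ℕ) (hh : h < h') (hd : 1 ≤ d) :
    ∃ c : ℕ, ∀ n : Fin d → ℕ,
      (∑ i, n i) / (p ^ h' * (p - 1)) ≤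
        (∑ i, padicValNat p (Nat.factorial (n i / p ^ h))) + c := by
  refine ⟨d, fun n => ?_⟩
  have hppos := hp.pos
  have hq : 0 < p ^ h' := Nat.pow_pos hppos
  calc (∑ i, n i) / (p ^ h' * (p - 1))
      ≤ (∑ i, n i) / p ^ h' := by
        rw [← Nat.div_div_eq_div_mul]; exact Nat.div_le_self _ _
  _ ≤ (∑ i, n i / p ^ h') + d := by
        simpa using sum_div_le Finset.univ n (p ^ h') hq
  _ ≤ (∑ i, padicValNat p (Nat.factorial (n i / p ^ h))) + d := by
        gcongr with i _
        calc n i / p ^ h' ≤ n i / p ^ (h + 1) :=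
              Nat.div_le_div_left (Nat.pow_le_pow_right hppos hh) (Nat.pow_pos hppos)
        _ = (n i / p ^ h) / p := by rw [pow_succ, Nat.div_div_eq_div_mul]
        _ ≤ _ := div_le_padicValNat_factorial p hp _
end

section
/- Let p be a prime, let h and d be natural numbers, and let n, m, k ∈ ℕ^d be multi-indices with |k| ≤ |n| + |m|. Then v_h(n) + v_h(m) + |k| ≤ v_h(k) + |n| + |m|; equivalently, v_h(n) + v_h(m) − v_h(k) ≤ |n| + |m| − |k|. -/
/-- Lipschitz property of `v_h(n) = ⌊|n|/(p^h(p-1))⌋`: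
if `|k| ≤ |n| + |m|` then `v_h(n) + v_h(m) + |k| ≤ v_h(k) + |n| + |m|`. -/
theorem vh_lipschitz (p : ℕ) (hp : p.Prime) (h d : ℕ) (n m k : Fin d → ℕ)
    (hk : ∑ i, k i ≤ (∑ i, n i) + ∑ i, m i) :
    (∑ i, n i) / (p ^ h * (p - 1)) + (∑ i, m i) / (p ^ h * (p - 1)) + ∑ i, k i ≤
      (∑ i, k i) / (p ^ h * (p - 1)) + ((∑ i, n i) + ∑ i, m i) := by
  set c := p ^ h * (p - 1) with hc
  set N := ∑ i, n i
  set M := ∑ i, m i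
  set K := ∑ i, k i
  have hcpos : 0 < c := by
    have h2 := hp.two_le
    have h1 : 0 < p - 1 := by omega
    positivity
  have h1 : N / c + M / c ≤ (N + M) / c := Nat.add_div_le_add_div N M c
  have h2 : (N + M) / c ≤ K / c + (N + M - K) := by
    calc (N + M) / c ≤ (K + (N + M - K) * c) / c := by
          apply Nat.div_le_div_right
          have : N + M - K ≤ (N + M - K) * c := Nat.le_mul_of_pos_right _ hcpos
          omega
      _ = K / c + (N + M - K) := Nat.add_mul_div_right _ _ hcpos
  omega
end

section
/- Let p be a prime, let d ≥ 1 be a natural number, and let h ≥ 2 be a natural number with p^{h−1} ≥ d. Let n ∈ ℕ^d be a multi-index and define k ∈ ℕ^d by k_i = ⌊n_i/p⌋. Then ⌊|n|/(p^h(p−1))⌋ ≤ ⌊|k|/(p^{h−2}(p−1))⌋, i.e. v_h(n) ≤ v_{h−2}(k). -/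
/-- For a prime `p`, `d ≥ 1`, `h ≥ 2` with `p^{h-1} ≥ d`, a multi-index `n : Fin d → ℕ`
and `k` defined by `k i = n i / p`, one has `v_h(n) ≤ v_{h-2}(k)`. -/
theorem vh_change_of_subgroup_bound (p : ℕ) (hp : p.Prime) (d : ℕ) (hd : 1 ≤ d)
    (h : ℕ) (hh : 2 ≤ h) (hph : d ≤ p ^ (h - 1)) (n : Fin d → ℕ) :
    (∑ i, n i) / (p ^ h * (p - 1)) ≤ (∑ i, n i / p) / (p ^ (h - 2) * (p - 1)) := by
  have hp2 : 2 ≤ p := hp.two_le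
  set N := ∑ i, n i with hN
  set K := ∑ i, n i / p with hK
  set M := p ^ (h - 2) * (p - 1) with hM
  set q := K / M with hq
  have hMpos : 0 < M := Nat.mul_pos (pow_pos hp.pos _) (by omega)
  have hKM : K < M * (q + 1) := by
    have h1 := Nat.div_add_mod K M
    have h2 := Nat.mod_lt K hMpos
    have h4 : M * (q + 1) = M * (K / M) + M := by rw [hq]; ring
    omega
  clear_value q
  have hNK : N ≤ p * K + d * (p - 1) := by
    have hle : ∀ i : Fin d, n i ≤ p * (n i / p) + (p - 1) := by
      intro i
      have h1 := Nat.div_add_mod (n i) p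
      have h2 := Nat.mod_lt (n i) hp.pos
      omega
    calc N ≤ ∑ i, (p * (n i / p) + (p - 1)) := Finset.sum_le_sum fun i _ => hle i
      _ = p * K + d * (p - 1) := by
          rw [Finset.sum_add_distrib, ← Finset.mul_sum, Finset.sum_const,
            Finset.card_univ, Fintype.card_fin, smul_eq_mul]
  have hd1 : d * (p - 1) ≤ p * M := by
    have : p ^ (h - 1) = p * p ^ (h - 2) := by
      rw [← pow_succ']
      congr 1
      omega
    calc d * (p - 1) ≤ p ^ (h - 1) * (p - 1) := Nat.mul_le_mul_right _ hph
      _ = p * M := by rw [this, hM, mul_assoc]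
  have hpow : p ^ h * (p - 1) = p ^ 2 * M := by
    rw [hM, ← mul_assoc, ← pow_add]
    congr 2
    omega
  rw [hpow]
  have hpos2 : 0 < p ^ 2 * M := Nat.mul_pos (by positivity) hMpos
  rw [← Nat.lt_succ_iff, Nat.div_lt_iff_lt_mul hpos2]
  have key : N < (q + 1) * (p ^ 2 * M) := by
    have hNle : N < p * (M * (q + 1)) + p * M := by
      calc N ≤ p * K + d * (p - 1) := hNK
        _ ≤ p * K + p * M := by omega
        _ < p * (M * (q + 1)) + p * M :=
            Nat.add_lt_add_right (mul_lt_mul_of_pos_left hKM hp.pos) (p * M)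
    have hp2sq : p * (M * (q + 1)) + p * M ≤ (q + 1) * (p ^ 2 * M) := by
      calc p * (M * (q + 1)) + p * M = p * M * (q + 2) := by ring
        _ ≤ p * M * (2 * (q + 1)) := mul_le_mul_right (by omega) _
        _ = 2 * (p * M * (q + 1)) := by ring
        _ ≤ p * (p * M * (q + 1)) := mul_le_mul_left hp2 _
        _ = (q + 1) * (p ^ 2 * M) := by ring
    omega
  simpa [Nat.succ_eq_add_one] using key
end

section
/- Let p be a prime, let h and d ≥ 1 be natural numbers, and let n, m ∈ ℕ^d be multi-indices. Then there exists a family of integers (a_k), indexed by multi-indices k ∈ ℕ^d with k_i ≤ n_i + m_i for all i, such that: (1) for every x ∈ ℤ^d one has (∏_{i=1}^d C(x_i, n_i)) · (∏_{i=1}^d C(x_i, m_i)) = Σ_{k ≤ n+m} a_k ∏_{i=1}^d C(x_i, k_i), where C(x, j) = x(x−1)⋯(x−j+1)/j! ∈ ℤ is the binomial coefficient function; and (2) for every such k, p^{v^h(k)} divides p^{v^h(n)+v^h(m)} · a_k. -/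
open Finset

private def bcoeff (n m k : ℕ) : ℕ := k.choose n * n.choose (n + m - k)


theorem legendre_split {M : Type*} [AddCommMonoid M] (h b : ℕ) (hb : h + 1 ≤ b) (f : ℕ → M) :
    ∑ i ∈ Ico 1 b, f i = (∑ i ∈ Ico 1 (h+1), f i) + ∑ i ∈ Ico 1 (b-h), f (h+i) := by
  rw [← Finset.sum_Ico_consecutive _ (by omega : 1 ≤ h+1) hb]
  congr 1
  rw [Finset.sum_Ico_eq_sum_range, Finset.sum_Ico_eq_sum_range]
  have : b - (h+1) = b - h - 1 := by omega
  rw [this]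
  exact Finset.sum_congr rfl fun j _ => by ring_nf

theorem legendre_ineq (p : ℕ) [hp : Fact p.Prime] (h A B C n m k : ℕ)
    (hA : A + C = m) (hB : B + C = n) (hk : A + B + C = k) :
    padicValNat p ((k / p ^ h).factorial) + padicValNat p A.factorial +
      padicValNat p B.factorial + padicValNat p C.factorial ≤
    padicValNat p ((n / p ^ h).factorial) + padicValNat p ((m / p ^ h).factorial) +
      padicValNat p k.factorial := by
  set b := h + 1 + Nat.log p k with hbdef
  have hp1 : 1 < p := hp.out.one_lt
  have hlog : ∀ x : ℕ, x ≤ k → Nat.log p x < b - h := fun x hx => by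
    have := Nat.log_mono_right (b := p) hx; omega
  have hdd : ∀ (x i : ℕ), x / p ^ h / p ^ i = x / p ^ (h + i) := fun x i => by
    rw [Nat.div_div_eq_div_mul, pow_add]
  rw [padicValNat_factorial (n := k / p ^ h) (hlog _ (Nat.div_le_self _ _)),
      padicValNat_factorial (n := n / p ^ h)
        (hlog _ (le_trans (Nat.div_le_self _ _) (by omega))),
      padicValNat_factorial (n := m / p ^ h)
        (hlog _ (le_trans (Nat.div_le_self _ _) (by omega))),
      padicValNat_factorial (n := A) (b := b) (by have := hlog A (by omega); omega),
      padicValNat_factorial (n := B) (b := b) (by have := hlog B (by omega); omega),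
      padicValNat_factorial (n := C) (b := b) (by have := hlog C (by omega); omega),
      padicValNat_factorial (n := k) (b := b) (by have := hlog k le_rfl; omega)]
  have hb : h + 1 ≤ b := by omega
  rw [legendre_split h b hb (fun i => A / p ^ i),
      legendre_split h b hb (fun i => B / p ^ i),
      legendre_split h b hb (fun i => C / p ^ i),
      legendre_split h b hb (fun i => k / p ^ i)]
  simp only [hdd]
  have low : (∑ i ∈ Ico 1 (h+1), A / p ^ i) + (∑ i ∈ Ico 1 (h+1), B / p ^ i)
      + (∑ i ∈ Ico 1 (h+1), C / p ^ i) ≤ ∑ i ∈ Ico 1 (h+1), k / p ^ i := by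
    rw [← Finset.sum_add_distrib, ← Finset.sum_add_distrib]
    refine Finset.sum_le_sum fun i _ => ?_
    calc A / p ^ i + B / p ^ i + C / p ^ i
        ≤ (A + B) / p ^ i + C / p ^ i := by
          have := Nat.add_div_le_add_div A B (p ^ i); omega
      _ ≤ (A + B + C) / p ^ i := Nat.add_div_le_add_div _ _ _
      _ = k / p ^ i := by rw [hk]
  have high : (∑ i ∈ Ico 1 (b-h), A / p ^ (h+i)) + (∑ i ∈ Ico 1 (b-h), B / p ^ (h+i))
      + (∑ i ∈ Ico 1 (b-h), C / p ^ (h+i))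
      ≤ (∑ i ∈ Ico 1 (b-h), n / p ^ (h+i)) + ∑ i ∈ Ico 1 (b-h), m / p ^ (h+i) := by
    rw [← Finset.sum_add_distrib, ← Finset.sum_add_distrib, ← Finset.sum_add_distrib]
    refine Finset.sum_le_sum fun i _ => ?_
    have h1 : B / p ^ (h+i) + C / p ^ (h+i) ≤ n / p ^ (h+i) := by
      have := Nat.add_div_le_add_div B C (p ^ (h+i)); rw [hB] at this; omega
    have h2 : A / p ^ (h+i) ≤ m / p ^ (h+i) :=
      Nat.div_le_div_right (by omega)
    omega
  omega



theorem bcoeff_key (p : ℕ) (hp : p.Prime) (h n m k : ℕ) (hk : k ≤ n + m) :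
    p ^ padicValNat p ((k / p ^ h).factorial) ∣
      p ^ (padicValNat p ((n / p ^ h).factorial) + padicValNat p ((m / p ^ h).factorial))
        * bcoeff n m k := by
  haveI : Fact p.Prime := ⟨hp⟩
  rcases eq_or_ne (bcoeff n m k) 0 with h0 | h0
  · simp [h0]
  have hnk : n ≤ k := by
    by_contra hc
    exact h0 (by simp [bcoeff, Nat.choose_eq_zero_of_lt (show k < n by omega)])
  have hmk : m ≤ k := by
    by_contra hc
    exact h0 (by simp [bcoeff, Nat.choose_eq_zero_of_lt (show n < n + m - k by omega)])
  set A := k - n with hA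
  set B := k - m with hB
  set C := n + m - k with hC
  -- bcoeff * A! * B! * C! = k!
  have hfact : bcoeff n m k * (A.factorial * B.factorial * C.factorial) = k.factorial := by
    have h1 : k.choose n * n.factorial * A.factorial = k.factorial :=
      Nat.choose_mul_factorial_mul_factorial hnk
    have h2 : n.choose C * C.factorial * B.factorial = n.factorial := by
      have hCB : n - C = B := by omega
      have h3 := Nat.choose_mul_factorial_mul_factorial (show C ≤ n by omega)
      rwa [hCB] at h3
    calc bcoeff n m k * (A.factorial * B.factorial * C.factorial)
        = k.choose n * (n.choose C * C.factorial * B.factorial) * A.factorial := by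
          unfold bcoeff; ring
      _ = k.choose n * n.factorial * A.factorial := by rw [h2]
      _ = k.factorial := h1
  have hval : padicValNat p (bcoeff n m k) + padicValNat p A.factorial
      + padicValNat p B.factorial + padicValNat p C.factorial
      = padicValNat p k.factorial := by
    rw [← hfact, padicValNat.mul h0 (by positivity),
        padicValNat.mul (by positivity) (Nat.factorial_ne_zero C),
        padicValNat.mul (Nat.factorial_ne_zero A) (Nat.factorial_ne_zero B)]
    ring
  have hineq := legendre_ineq p h A B C n m k (by omega) (by omega) (by omega)
  have hle : padicValNat p ((k / p ^ h).factorial) ≤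
      padicValNat p ((n / p ^ h).factorial) + padicValNat p ((m / p ^ h).factorial)
        + padicValNat p (bcoeff n m k) := by omega
  calc p ^ padicValNat p ((k / p ^ h).factorial)
      ∣ p ^ (padicValNat p ((n / p ^ h).factorial) + padicValNat p ((m / p ^ h).factorial)
          + padicValNat p (bcoeff n m k)) := pow_dvd_pow p hle
    _ = p ^ (padicValNat p ((n / p ^ h).factorial) + padicValNat p ((m / p ^ h).factorial))
          * p ^ padicValNat p (bcoeff n m k) := by rw [pow_add]
    _ ∣ _ := mul_dvd_mul_left _ pow_padicValNat_dvd

theorem one_var (n m : ℕ) (x : ℤ) :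
    Ring.choose x n * Ring.choose x m =
      ∑ k ∈ range (n + m + 1), (bcoeff n m k : ℤ) * Ring.choose x k := by
  rw [range_eq_Ico, ← Finset.sum_Ico_consecutive _ (Nat.zero_le n) (by omega : n ≤ n + m + 1)]
  have h1 : ∑ k ∈ Ico 0 n, (bcoeff n m k : ℤ) * Ring.choose x k = 0 :=
    Finset.sum_eq_zero fun k hk => by
      simp [bcoeff, Nat.choose_eq_zero_of_lt (mem_Ico.mp hk).2]
  rw [h1, zero_add, Finset.sum_Ico_eq_sum_range]
  have h2 : n + m + 1 - n = m + 1 := by omega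
  rw [h2]
  have h3 : ∀ j ∈ range (m + 1),
      (bcoeff n m (n + j) : ℤ) * Ring.choose x (n + j)
        = Ring.choose x n * (Ring.choose (x - (n:ℤ)) j * (n.choose (m - j) : ℤ)) := by
    intro j hj
    have hj' : j ≤ m := by have := Finset.mem_range.mp hj; omega
    have hc : bcoeff n m (n + j) = (n + j).choose n * n.choose (m - j) := by
      unfold bcoeff; congr 2; omega
    have hs := Ring.choose_smul_choose x (n := n + j) (k := n) (Nat.le_add_right n j)
    have hs' : ((n + j).choose n : ℤ) * Ring.choose x (n + j)
        = Ring.choose x n * Ring.choose (x - (n:ℤ)) j := by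
      rw [← nsmul_eq_mul, hs, Nat.add_sub_cancel_left]
    push_cast [hc]
    calc ((n + j).choose n : ℤ) * (n.choose (m - j) : ℤ) * Ring.choose x (n + j)
        = (((n + j).choose n : ℤ) * Ring.choose x (n + j)) * (n.choose (m - j) : ℤ) := by ring
      _ = Ring.choose x n * (Ring.choose (x - (n:ℤ)) j * (n.choose (m - j) : ℤ)) := by
          rw [hs']; ring
  rw [Finset.sum_congr rfl h3, ← Finset.mul_sum]
  congr 1
  have hv := Ring.add_choose_eq (r := x - (n:ℤ)) (s := (n:ℤ)) m (Commute.all _ _)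
  rw [sub_add_cancel] at hv
  rw [hv, Finset.Nat.sum_antidiagonal_eq_sum_range_succ_mk]
  exact Finset.sum_congr rfl fun j hj => by rw [Ring.choose_natCast]

/-- Product of products of binomial coefficient polynomials expands integrally in
binomial coefficient polynomials, with the `p`-adic estimate
`v_p(a_k) ≥ v^h(k) − v^h(n) − v^h(m)` on the coefficients, where
`v^h(n) = ∑ i, v_p(⌊n_i/p^h⌋!)` and `C(x, j) = Ring.choose x j` is the integer-valued
binomial coefficient function. -/
theorem binomial_product_expansion (p : ℕ) (hp : p.Prime) (h d : ℕ) (hd : 1 ≤ d)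
    (n m : Fin d → ℕ) :
    ∃ a : (Fin d → ℕ) → ℤ,
      (∀ x : Fin d → ℤ,
        (∏ i, Ring.choose (x i) (n i)) * (∏ i, Ring.choose (x i) (m i)) =
          ∑ k ∈ Fintype.piFinset (fun i => Finset.range (n i + m i + 1)),
            a k * ∏ i, Ring.choose (x i) (k i)) ∧
      (∀ k : Fin d → ℕ, (∀ i, k i ≤ n i + m i) →
        (p : ℤ) ^ (∑ i, padicValNat p (Nat.factorial (k i / p ^ h))) ∣
          (p : ℤ) ^ ((∑ i, padicValNat p (Nat.factorial (n i / p ^ h))) +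
              ∑ i, padicValNat p (Nat.factorial (m i / p ^ h))) * a k) := by
  classical
  refine ⟨fun k => ∏ i, (bcoeff (n i) (m i) (k i) : ℤ), ?_, ?_⟩
  · intro x
    rw [← Finset.prod_mul_distrib]
    have h1 : ∀ i : Fin d, Ring.choose (x i) (n i) * Ring.choose (x i) (m i)
        = ∑ k ∈ Finset.range (n i + m i + 1),
            (bcoeff (n i) (m i) k : ℤ) * Ring.choose (x i) k :=
      fun i => one_var (n i) (m i) (x i)
    rw [Finset.prod_congr rfl fun i _ => h1 i, Finset.prod_univ_sum]
    exact Finset.sum_congr rfl fun k _ => by rw [← Finset.prod_mul_distrib]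
  · intro k hk
    rw [← Finset.prod_pow_eq_pow_sum]
    have step : ∀ i : Fin d,
        (p : ℤ) ^ padicValNat p (Nat.factorial (k i / p ^ h)) ∣
          (p : ℤ) ^ (padicValNat p (Nat.factorial (n i / p ^ h)) +
              padicValNat p (Nat.factorial (m i / p ^ h))) * (bcoeff (n i) (m i) (k i) : ℤ) := by
      intro i
      have := bcoeff_key p hp h (n i) (m i) (k i) (hk i)
      have := Int.natCast_dvd_natCast.mpr this
      push_cast at this
      exact this
    have hprod := Finset.prod_dvd_prod_of_dvd (s := (Finset.univ : Finset (Fin d)))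
      (fun i => (p : ℤ) ^ padicValNat p (Nat.factorial (k i / p ^ h)))
      (fun i => (p : ℤ) ^ (padicValNat p (Nat.factorial (n i / p ^ h)) +
          padicValNat p (Nat.factorial (m i / p ^ h))) * (bcoeff (n i) (m i) (k i) : ℤ))
      (fun i _ => step i)
    refine hprod.trans (dvd_of_eq ?_)
    rw [Finset.prod_mul_distrib, Finset.prod_pow_eq_pow_sum, Finset.sum_add_distrib]
end

section
/- Let p be a prime and let G be a group in which every commutator x⁻¹y⁻¹xy (for x, y ∈ G) is a p-th power in G. Let J be the augmentation ideal of the group ring ℤ[G], i.e. the kernel of the ring homomorphism ℤ[G] → ℤ sending every element of G to 1. Then for all a, b ∈ ℤ[G], the ring commutator ab − ba lies in the ideal pJ + J^p. -/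
open Pointwise

/-- The augmentation ideal of the group ring `ℤ[G]`: the kernel of the ring
homomorphism `ℤ[G] → ℤ` sending every element of `G` to `1`, viewed as a
`ℤ`-submodule (so that its powers make sense in the noncommutative ring `ℤ[G]`). -/
noncomputable def augIdeal (G : Type*) [Group G] : Submodule ℤ (MonoidAlgebra ℤ G) :=
  LinearMap.ker (MonoidAlgebra.lift (R := ℤ) (M := G) (A := ℤ) 1).toLinearMap

section aux
variable {G : Type*} [Group G]

lemma mem_augIdeal_iff (x : MonoidAlgebra ℤ G) :
    x ∈ augIdeal G ↔ (MonoidAlgebra.lift (R := ℤ) (M := G) (A := ℤ) 1) x = 0 := Iff.rfl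

lemma augIdeal_mul_left (x : MonoidAlgebra ℤ G) {y : MonoidAlgebra ℤ G}
    (hy : y ∈ augIdeal G) : x * y ∈ augIdeal G := by
  rw [mem_augIdeal_iff] at *
  simp [map_mul, hy]

lemma augIdeal_pow_mul_left {n : ℕ} (hn : 1 ≤ n) (x : MonoidAlgebra ℤ G)
    {t : MonoidAlgebra ℤ G} (ht : t ∈ augIdeal G ^ n) :
    x * t ∈ augIdeal G ^ n := by
  obtain ⟨m, rfl⟩ : ∃ m, n = m + 1 := ⟨n - 1, by omega⟩
  rw [pow_succ'] at ht ⊢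
  refine Submodule.mul_induction_on ht (fun a ha b hb => ?_) (fun a b iha ihb => ?_)
  · rw [← mul_assoc]
    exact Submodule.mul_mem_mul (augIdeal_mul_left x ha) hb
  · rw [mul_add]
    exact add_mem iha ihb

lemma target_mul_left (p : ℕ) (hp : 1 ≤ p) (x : MonoidAlgebra ℤ G)
    {m : MonoidAlgebra ℤ G}
    (hm : m ∈ (p : ℤ) • augIdeal G + augIdeal G ^ p) :
    x * m ∈ (p : ℤ) • augIdeal G + augIdeal G ^ p := by
  rw [Submodule.add_eq_sup, Submodule.mem_sup] at hm ⊢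
  obtain ⟨s, hs, t, ht, rfl⟩ := hm
  obtain ⟨j, hj, hj2⟩ := Submodule.mem_map.mp hs
  have hj2' : (p : ℤ) • j = s := hj2
  subst hj2'
  refine ⟨x * ((p : ℤ) • j), ?_, x * t, augIdeal_pow_mul_left hp x ht, (mul_add x _ _).symm⟩
  rw [mul_smul_comm]
  exact Submodule.smul_mem_pointwise_smul _ _ _ (augIdeal_mul_left x hj)

lemma key_pow_sub_one (p : ℕ) (hp : p.Prime) (z : G) :
    MonoidAlgebra.of ℤ G (z ^ p) - 1 ∈ (p : ℤ) • augIdeal G + augIdeal G ^ p := by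
  set x : MonoidAlgebra ℤ G := MonoidAlgebra.of ℤ G z - 1 with hx
  have hxJ : x ∈ augIdeal G := by
    rw [mem_augIdeal_iff]
    simp [hx]
  have hof : MonoidAlgebra.of ℤ G (z ^ p) = (x + 1) ^ p := by
    simp [hx, map_pow]
  rw [hof, (Commute.one_right x).add_pow p]
  rw [Finset.sum_range_succ' _ p]
  simp only [pow_zero, one_mul, Nat.choose_zero_right, Nat.cast_one, mul_one, one_pow]
  rw [add_sub_cancel_right]
  refine Submodule.sum_mem _ fun k hk => ?_
  rw [Finset.mem_range] at hk
  rcases eq_or_lt_of_le (Nat.succ_le_of_lt hk) with heq | hlt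
  · -- k + 1 = p
    apply Submodule.mem_sup_right
    rw [show k + 1 = p from heq, Nat.choose_self, Nat.cast_one, mul_one]
    exact Submodule.pow_mem_pow _ hxJ p
  · -- k + 1 < p : p ∣ choose
    apply Submodule.mem_sup_left
    obtain ⟨m, hm⟩ := hp.dvd_choose_self (Nat.succ_ne_zero k) hlt
    rw [hm, Nat.cast_mul]
    have : x ^ (k + 1) * ((p : MonoidAlgebra ℤ G) * (m : MonoidAlgebra ℤ G))
        = (p : ℤ) • (x ^ (k + 1) * (m : MonoidAlgebra ℤ G)) := by
      rw [zsmul_eq_mul]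
      push_cast
      rw [← mul_assoc, ← (Nat.cast_commute p (x ^ (k+1))).eq, mul_assoc]
    rw [this]
    refine Submodule.smul_mem_pointwise_smul _ _ _ ?_
    have hx0 : (MonoidAlgebra.lift (R := ℤ) (M := G) (A := ℤ) 1) x = 0 := hxJ
    rw [mem_augIdeal_iff]
    simp [map_mul, map_pow, hx0]

lemma single_case (p : ℕ) (hp : p.Prime)
    (hcomm : ∀ x y : G, ∃ z : G, x⁻¹ * y⁻¹ * x * y = z ^ p) (g h : G) :
    MonoidAlgebra.of ℤ G g * MonoidAlgebra.of ℤ G h -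
      MonoidAlgebra.of ℤ G h * MonoidAlgebra.of ℤ G g
      ∈ (p : ℤ) • augIdeal G + augIdeal G ^ p := by
  obtain ⟨z, hz⟩ := hcomm g h
  have key : MonoidAlgebra.of ℤ G g * MonoidAlgebra.of ℤ G h -
      MonoidAlgebra.of ℤ G h * MonoidAlgebra.of ℤ G g
      = MonoidAlgebra.of ℤ G h * MonoidAlgebra.of ℤ G g *
        (MonoidAlgebra.of ℤ G (z ^ p) - 1) := by
    rw [← hz, mul_sub, mul_one]
    simp only [← map_mul]
    rw [show h * g * (g⁻¹ * h⁻¹ * g * h) = g * h from by group]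
  rw [key]
  exact target_mul_left p hp.one_lt.le _ (key_pow_sub_one p hp z)

end aux

/-- If every commutator in `G` is a `p`-th power, then every ring commutator in
`ℤ[G]` lies in `pJ + J^p`, where `J` is the augmentation ideal. -/
theorem ring_commutator_mem (p : ℕ) (hp : p.Prime) (G : Type*) [Group G]
    (hcomm : ∀ x y : G, ∃ z : G, x⁻¹ * y⁻¹ * x * y = z ^ p)
    (a b : MonoidAlgebra ℤ G) :
    a * b - b * a ∈ (p : ℤ) • augIdeal G + augIdeal G ^ p := by
  set M := (p : ℤ) • augIdeal G + augIdeal G ^ p with hM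
  induction a using MonoidAlgebra.induction_on with
  | of g =>
      induction b using MonoidAlgebra.induction_on with
      | of h => exact single_case p hp hcomm g h
      | add f₁ f₂ h₁ h₂ =>
          have : MonoidAlgebra.of ℤ G g * (f₁ + f₂) - (f₁ + f₂) * MonoidAlgebra.of ℤ G g
              = (MonoidAlgebra.of ℤ G g * f₁ - f₁ * MonoidAlgebra.of ℤ G g)
              + (MonoidAlgebra.of ℤ G g * f₂ - f₂ * MonoidAlgebra.of ℤ G g) := by noncomm_ring
          rw [this]; exact add_mem h₁ h₂
      | smul r f hf =>
          have : MonoidAlgebra.of ℤ G g * (r • f) - (r • f) * MonoidAlgebra.of ℤ G g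
              = r • (MonoidAlgebra.of ℤ G g * f - f * MonoidAlgebra.of ℤ G g) := by
            rw [smul_sub, mul_smul_comm, smul_mul_assoc]
          rw [this]; exact Submodule.smul_mem _ r hf
  | add f₁ f₂ h₁ h₂ =>
      have : (f₁ + f₂) * b - b * (f₁ + f₂)
          = (f₁ * b - b * f₁) + (f₂ * b - b * f₂) := by noncomm_ring
      rw [this]; exact add_mem h₁ h₂
  | smul r f hf =>
      have : (r • f) * b - b * (r • f) = r • (f * b - b * f) := by
        rw [smul_sub, smul_mul_assoc, mul_smul_comm]
      rw [this]; exact Submodule.smul_mem _ r hf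
end
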